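/- arXiv:1803.02949 — 8 statements merged into one kernel-verified Lean document; each statement's English description precedes it below -/
import Mathlib

section
/- Let A be a complex (d+k)×(d+k) matrix with all diagonal entries equal to 1 and rank(A) ≤ d. Then the maximum absolute value of an off-diagonal entry of A is at least sqrt(k / (d(d+k-1))). -/
/-!
Let `P` be the orthogonal projection onto the column space of `A`. Then `tr A = tr (Pᴴ A)`, and
Cauchy–Schwarz for the Frobenius inner product gives
`|tr A|² ≤ ‖P‖_F² ‖A‖_F² = tr P · ‖A‖_F² = rank A · ‖A‖_F²`.
For a unit-diagonal `A` of size `N = d + k` whose off-diagonal entries have modulus at most `m`,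
this reads `N² ≤ d · N (1 + (N - 1) m²)`, that is `k ≤ d (d + k - 1) m²`.
-/

open Matrix

namespace Matrix

variable {𝕜 α m n : Type*} [RCLike 𝕜] [Fintype m] [Fintype n]

theorem sum_sum_norm_sq_eq_re_trace_conjTranspose_mul_self (A : Matrix m n 𝕜) :
    ∑ i, ∑ j, ‖A i j‖ ^ 2 = RCLike.re (Aᴴ * A).trace := by
  simp only [trace, diag_apply, mul_apply, conjTranspose_apply, map_sum, RCLike.star_def,
    RCLike.conj_mul, ← RCLike.ofReal_pow, RCLike.ofReal_re]
  exact Finset.sum_comm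

theorem norm_trace_conjTranspose_mul_sq_le (A B : Matrix m n 𝕜) :
    ‖(Bᴴ * A).trace‖ ^ 2 ≤ (∑ i, ∑ j, ‖B i j‖ ^ 2) * ∑ i, ∑ j, ‖A i j‖ ^ 2 := by
  have htriangle : ‖(Bᴴ * A).trace‖ ≤ ∑ i, ∑ j, ‖B i j‖ * ‖A i j‖ := by
    simp only [trace, diag_apply, mul_apply, conjTranspose_apply]
    rw [Finset.sum_comm]
    refine (norm_sum_le _ _).trans (Finset.sum_le_sum fun i _ => (norm_sum_le _ _).trans_eq ?_)
    simp
  simp only [← Fintype.sum_prod_type'] at htriangle ⊢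
  calc ‖(Bᴴ * A).trace‖ ^ 2 ≤ (∑ p : m × n, ‖B p.1 p.2‖ * ‖A p.1 p.2‖) ^ 2 := by
        gcongr
    _ ≤ _ := Finset.sum_mul_sq_le_sq_mul_sq _ _ _

theorem sum_sum_norm_sq_le_of_norm_offDiag_le [SeminormedAddCommGroup α] (A : Matrix n n α)
    {c : ℝ} (hdiag : ∀ i, ‖A i i‖ ≤ 1) (hoff : ∀ i j, i ≠ j → ‖A i j‖ ≤ c) :
    ∑ i, ∑ j, ‖A i j‖ ^ 2 ≤ Fintype.card n * (1 + (Fintype.card n - 1) * c ^ 2) := by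
  classical
  have hrow : ∀ i, ∑ j, ‖A i j‖ ^ 2 ≤ 1 + (Fintype.card n - 1) * c ^ 2 := by
    intro i
    rw [← Finset.add_sum_erase _ _ (Finset.mem_univ i)]
    gcongr
    · exact pow_le_one₀ (norm_nonneg _) (hdiag i)
    · calc ∑ j ∈ Finset.univ.erase i, ‖A i j‖ ^ 2
          ≤ (Finset.univ.erase i).card • c ^ 2 :=
            Finset.sum_le_card_nsmul _ _ _ fun j hj =>
              pow_le_pow_left₀ (norm_nonneg _) (hoff i j (Finset.ne_of_mem_erase hj).symm) 2
        _ = (Fintype.card n - 1) * c ^ 2 := by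
            rw [Finset.card_erase_of_mem (Finset.mem_univ i), nsmul_eq_mul, Finset.card_univ,
              Nat.cast_pred (Fintype.card_pos_iff.mpr ⟨i⟩)]
  calc ∑ i, ∑ j, ‖A i j‖ ^ 2 ≤ ∑ _i : n, (1 + (Fintype.card n - 1) * c ^ 2) :=
        Finset.sum_le_sum fun i _ => hrow i
    _ = _ := by rw [Finset.sum_const, Finset.card_univ, nsmul_eq_mul]

theorem exists_ne_forall_ne_norm_le [Nontrivial n] [Norm α] (A : Matrix n n α) :
    ∃ i j, i ≠ j ∧ ∀ i' j', i' ≠ j' → ‖A i' j'‖ ≤ ‖A i j‖ := by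
  obtain ⟨a, b, hab⟩ := exists_pair_ne n
  obtain ⟨p, hp, hmax⟩ := Finset.exists_max_image Finset.univ.offDiag (fun p => ‖A p.1 p.2‖)
    ⟨(a, b), by simpa using hab⟩
  exact ⟨p.1, p.2, (Finset.mem_offDiag.mp hp).2.2,
    fun i' j' h => hmax (i', j') (by simpa using h)⟩

variable [DecidableEq n]

theorem exists_isStarProjection_mul_eq_self_trace_eq_rank (A : Matrix n n 𝕜) :
    ∃ P : Matrix n n 𝕜, IsStarProjection P ∧ P * A = A ∧ P.trace = A.rank := by
  set W := LinearMap.range (toEuclideanLin A)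
  set e : Matrix n n 𝕜 ≃⋆ₐ[𝕜] (EuclideanSpace 𝕜 n →L[𝕜] EuclideanSpace 𝕜 n) := toEuclideanCLM
  refine ⟨e.symm W.starProjection, isStarProjection_starProjection.map e.symm, ?_, ?_⟩
  · refine EquivLike.injective e ?_
    rw [map_mul e, e.apply_symm_apply]
    ext1 x
    exact W.starProjection_eq_self_iff.mpr ⟨x, rfl⟩
  · have hproj : LinearMap.IsProj W (W.starProjection : _ →ₗ[𝕜] _) :=
      ⟨W.starProjection_apply_mem, fun x hx => W.starProjection_eq_self_iff.mpr hx⟩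
    rw [rank_eq_finrank_range_toLin A (EuclideanSpace.basisFun n 𝕜).toBasis
      (EuclideanSpace.basisFun n 𝕜).toBasis, ← toEuclideanLin_eq_toLin_orthonormal, ← hproj.trace,
      ← trace_toLin_eq _ (EuclideanSpace.basisFun n 𝕜).toBasis,
      ← toEuclideanLin_eq_toLin_orthonormal, ← coe_toEuclideanCLM_eq_toEuclideanLin,
      StarAlgEquiv.apply_symm_apply]

theorem norm_trace_sq_le_rank_mul_sum_sum_norm_sq (A : Matrix n n 𝕜) :
    ‖A.trace‖ ^ 2 ≤ A.rank * ∑ i, ∑ j, ‖A i j‖ ^ 2 := by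
  obtain ⟨P, hP, hPA, htrace⟩ := exists_isStarProjection_mul_eq_self_trace_eq_rank A
  have hPH : Pᴴ = P := hP.isSelfAdjoint
  have hsumP : ∑ i, ∑ j, ‖P i j‖ ^ 2 = A.rank := by
    rw [sum_sum_norm_sq_eq_re_trace_conjTranspose_mul_self, hPH, hP.isIdempotentElem.eq, htrace,
      RCLike.natCast_re]
  calc ‖A.trace‖ ^ 2 = ‖(Pᴴ * A).trace‖ ^ 2 := by rw [hPH, hPA]
    _ ≤ _ := hsumP ▸ norm_trace_conjTranspose_mul_sq_le A P

theorem card_le_rank_mul_of_norm_offDiag_le [Nonempty n] (A : Matrix n n 𝕜) {c : ℝ}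
    (hdiag : ∀ i, A i i = 1) (hoff : ∀ i j, i ≠ j → ‖A i j‖ ≤ c) :
    (Fintype.card n : ℝ) ≤ A.rank * (1 + (Fintype.card n - 1) * c ^ 2) := by
  set N : ℝ := (Fintype.card n : ℝ)
  have htrace : A.trace = N := by simp [trace, hdiag, N]
  have hfrob := A.sum_sum_norm_sq_le_of_norm_offDiag_le (fun i => by simp [hdiag]) hoff
  refine le_of_mul_le_mul_left ?_ (by positivity : 0 < N)
  calc N * N = ‖A.trace‖ ^ 2 := by
        rw [htrace, RCLike.norm_ofReal, abs_of_nonneg (by positivity), sq]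
    _ ≤ A.rank * ∑ i, ∑ j, ‖A i j‖ ^ 2 := A.norm_trace_sq_le_rank_mul_sum_sum_norm_sq
    _ ≤ A.rank * (N * (1 + (N - 1) * c ^ 2)) := by gcongr
    _ = N * (A.rank * (1 + (N - 1) * c ^ 2)) := by ring

end Matrix

theorem stmt_0 (d k : ℕ) (hd : 0 < d) (hk : 0 < k)
    (A : Matrix (Fin (d + k)) (Fin (d + k)) ℂ)
    (hdiag : ∀ i, A i i = 1) (hrank : A.rank ≤ d) :
    ∃ i j, i ≠ j ∧
      Real.sqrt ((k : ℝ) / ((d : ℝ) * ((d : ℝ) + (k : ℝ) - 1))) ≤ ‖A i j‖ := by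
  have : Nontrivial (Fin (d + k)) := Fin.nontrivial_iff_two_le.mpr (by omega)
  obtain ⟨i, j, hij, hmax⟩ := A.exists_ne_forall_ne_norm_le
  refine ⟨i, j, hij, Real.sqrt_le_iff.mpr ⟨norm_nonneg _, ?_⟩⟩
  have hbound := A.card_le_rank_mul_of_norm_offDiag_le hdiag hmax
  rw [Fintype.card_fin] at hbound
  push_cast at hbound
  have hd' : (0 : ℝ) < d := by exact_mod_cast hd
  have hk' : (1 : ℝ) ≤ k := by exact_mod_cast hk
  have hrank' : (A.rank : ℝ) ≤ d := by exact_mod_cast hrank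
  have hN : (d + k : ℝ) ≤ d * (1 + (d + k - 1) * ‖A i j‖ ^ 2) :=
    hbound.trans <| mul_le_mul_of_nonneg_right hrank' <|
      add_nonneg zero_le_one (mul_nonneg (by linarith) (sq_nonneg _))
  rw [div_le_iff₀ (mul_pos hd' (by linarith))]
  linarith
end

section
/- For every positive integer d, the minimum over all sets of d+1 unit vectors in ℝ^d of the maximum absolute inner product between distinct vectors equals 1/d. -/
open scoped RealInnerProductSpace

/-!
For vectors `x i` in a `d`-dimensional space let `A` be their coordinate matrix in an orthonormal
basis, so that `AᵀA` is their Gram matrix. The frame operator `AAᵀ` has trace `∑ ‖x i‖²`, and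
since `AAᵀ` and `AᵀA` have the same Frobenius norm, the squares of its entries sum to
`∑ ⟪x i, x j⟫²`. Cauchy–Schwarz on its diagonal gives the Welch bound
`(∑ ‖x i‖²)² ≤ d ∑ ⟪x i, x j⟫²`, which for `d + 1` unit vectors forces some
`⟪x i, x j⟫² ≥ 1 / d²`. Equality holds for the regular simplex: the vectors `e i - 𝟙 / (d + 1)`
of `ℝ^(d+1)` lie in the hyperplane `𝟙ᗮ ≅ ℝ^d`, and after normalisation their pairwise inner
products are `-1 / d`.
-/

open Finset Module Matrix

section Welch

variable {ι κ : Type*} [Fintype ι] [Fintype κ]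

theorem Matrix.sq_trace_le_card_mul_sum_sq (M : Matrix κ κ ℝ) :
    M.trace ^ 2 ≤ Fintype.card κ * ∑ a, ∑ b, M a b ^ 2 := by
  calc M.trace ^ 2 ≤ Fintype.card κ * ∑ a, M a a ^ 2 := sq_sum_le_card_mul_sum_sq
    _ ≤ Fintype.card κ * ∑ a, ∑ b, M a b ^ 2 := by
      gcongr with a
      exact single_le_sum (f := fun b => M a b ^ 2) (fun _ _ => sq_nonneg _) (mem_univ a)

theorem Matrix.sum_sq_eq_trace_mul_transpose (A : Matrix κ ι ℝ) :
    ∑ a, ∑ i, A a i ^ 2 = (A * Aᵀ).trace := by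
  simp [Matrix.trace, Matrix.mul_apply, sq]

theorem Matrix.sum_sq_transpose_mul_self (A : Matrix κ ι ℝ) :
    ∑ i, ∑ j, (Aᵀ * A) i j ^ 2 = ∑ a, ∑ b, (A * Aᵀ) a b ^ 2 := by
  simp only [sum_sq_eq_trace_mul_transpose, transpose_mul, transpose_transpose]
  simp only [Matrix.mul_assoc]
  rw [trace_mul_comm]
  simp only [Matrix.mul_assoc]

variable {E : Type*} [NormedAddCommGroup E] [InnerProductSpace ℝ E] [FiniteDimensional ℝ E]

theorem sq_sum_norm_sq_le_finrank_mul_sum_inner_sq (x : ι → E) :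
    (∑ i, ‖x i‖ ^ 2) ^ 2 ≤ finrank ℝ E * ∑ i, ∑ j, ⟪x i, x j⟫ ^ 2 := by
  let b := stdOrthonormalBasis ℝ E
  let A : Matrix (Fin (finrank ℝ E)) ι ℝ := .of fun a i => ⟪b a, x i⟫
  have hgram : ∀ i j, (Aᵀ * A) i j = ⟪x i, x j⟫ := fun i j => by
    simpa [A, Matrix.mul_apply, real_inner_comm (x i)] using b.sum_inner_mul_inner (x i) (x j)
  have htrace : ∑ i, ‖x i‖ ^ 2 = (A * Aᵀ).trace := by
    rw [trace_mul_comm]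
    simp [Matrix.trace, hgram]
  calc (∑ i, ‖x i‖ ^ 2) ^ 2 ≤ finrank ℝ E * ∑ a, ∑ b, (A * Aᵀ) a b ^ 2 := by
        simpa [htrace] using sq_trace_le_card_mul_sum_sq (A * Aᵀ)
    _ = finrank ℝ E * ∑ i, ∑ j, ⟪x i, x j⟫ ^ 2 := by
        simp only [← sum_sq_transpose_mul_self, hgram]

theorem card_sq_le_finrank_mul_of_inner_sq_le {x : ι → E} (hx : ∀ i, ‖x i‖ = 1) {μ : ℝ}
    (hμ : ∀ i j, i ≠ j → ⟪x i, x j⟫ ^ 2 ≤ μ) :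
    (Fintype.card ι : ℝ) ^ 2 ≤
      finrank ℝ E * (Fintype.card ι + Fintype.card ι * (Fintype.card ι - 1) * μ) := by
  classical
  have hrow : ∀ i, ∑ j, ⟪x i, x j⟫ ^ 2 ≤ 1 + (Fintype.card ι - 1) * μ := fun i => by
    rw [← add_sum_erase _ _ (mem_univ i), real_inner_self_eq_norm_sq, hx i]
    have hoff := sum_le_card_nsmul (univ.erase i) (fun j => ⟪x i, x j⟫ ^ 2) μ
      fun j hj => hμ i j (ne_of_mem_erase hj).symm
    have : Nonempty ι := ⟨i⟩
    rw [card_erase_of_mem (mem_univ i), card_univ, nsmul_eq_mul,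
      Nat.cast_pred Fintype.card_pos] at hoff
    linarith
  calc (Fintype.card ι : ℝ) ^ 2 = (∑ i, ‖x i‖ ^ 2) ^ 2 := by simp [hx]
    _ ≤ finrank ℝ E * ∑ i, ∑ j, ⟪x i, x j⟫ ^ 2 := sq_sum_norm_sq_le_finrank_mul_sum_inner_sq x
    _ ≤ finrank ℝ E * ∑ _i : ι, (1 + (Fintype.card ι - 1) * μ) := by gcongr with i; exact hrow i
    _ = finrank ℝ E * (Fintype.card ι + Fintype.card ι * (Fintype.card ι - 1) * μ) := by
      simp only [sum_const, card_univ, nsmul_eq_mul]; ring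

theorem exists_ne_inv_finrank_le_abs_inner {d : ℕ} (hd : 0 < d) (hE : finrank ℝ E = d)
    {x : Fin (d + 1) → E} (hx : ∀ i, ‖x i‖ = 1) :
    ∃ i j, i ≠ j ∧ 1 / (d : ℝ) ≤ |⟪x i, x j⟫| := by
  have hpairs : (univ : Finset (Fin (d + 1))).offDiag.Nonempty :=
    ⟨(0, Fin.last d), by simp [Fin.ext_iff, hd.ne]⟩
  obtain ⟨⟨i, j⟩, hij, hmax⟩ := exists_max_image _ (fun p => ⟪x p.1, x p.2⟫ ^ 2) hpairs
  refine ⟨i, j, (mem_offDiag.mp hij).2.2, ?_⟩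
  have hwelch := card_sq_le_finrank_mul_of_inner_sq_le hx (μ := ⟪x i, x j⟫ ^ 2)
    fun k l hkl => hmax (k, l) (by simp [hkl])
  simp only [Fintype.card_fin, hE, Nat.cast_add, Nat.cast_one, add_sub_cancel_right] at hwelch
  have hd' : (0 : ℝ) < d := by exact_mod_cast hd
  have : (1 / (d : ℝ)) ^ 2 ≤ |⟪x i, x j⟫| ^ 2 := by
    rw [sq_abs, div_pow, one_pow, div_le_iff₀ (by positivity)]
    nlinarith
  exact (sq_le_sq₀ (by positivity) (abs_nonneg _)).mp this

end Welch

section Simplex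

theorem exists_euclidean_gram_eq {F ι : Type*} [NormedAddCommGroup F] [InnerProductSpace ℝ F]
    (W : Submodule ℝ F) [FiniteDimensional ℝ W] {d : ℕ} (hW : finrank ℝ W = d) {y : ι → F}
    (hy : ∀ i, y i ∈ W) :
    ∃ x : ι → EuclideanSpace ℝ (Fin d), ∀ i j, ⟪x i, x j⟫ = ⟪y i, y j⟫ := by
  let f := ((stdOrthonormalBasis ℝ W).reindex (finCongr hW)).repr
  exact ⟨fun i => f ⟨y i, hy i⟩, fun i j => f.inner_map_map _ _⟩

noncomputable def allOnes (n : ℕ) : EuclideanSpace ℝ (Fin n) := WithLp.toLp 2 fun _ => 1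

theorem inner_single_allOnes {n : ℕ} (i : Fin n) : ⟪EuclideanSpace.single i 1, allOnes n⟫ = 1 := by
  simp [allOnes, EuclideanSpace.inner_single_left]

theorem inner_allOnes_allOnes (n : ℕ) : ⟪allOnes n, allOnes n⟫ = n := by
  rw [allOnes, PiLp.inner_apply]
  simp

noncomputable def centeredBasisVector (n : ℕ) (i : Fin n) : EuclideanSpace ℝ (Fin n) :=
  EuclideanSpace.single i 1 - (n : ℝ)⁻¹ • allOnes n

theorem inner_centeredBasisVector {n : ℕ} (i j : Fin n) :
    ⟪centeredBasisVector n i, centeredBasisVector n j⟫ = (if i = j then 1 else 0) - (n : ℝ)⁻¹ := by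
  have hn : (n : ℝ) ≠ 0 := by exact_mod_cast (Fin.pos i).ne'
  simp only [centeredBasisVector, inner_sub_left, inner_sub_right, real_inner_smul_left,
    real_inner_smul_right]
  rw [orthonormal_iff_ite.mp EuclideanSpace.orthonormal_single i j, inner_single_allOnes,
    real_inner_comm (EuclideanSpace.single j 1), inner_single_allOnes, inner_allOnes_allOnes]
  field_simp
  ring

theorem centeredBasisVector_mem_orthogonal {n : ℕ} (i : Fin n) :
    centeredBasisVector n i ∈ (ℝ ∙ allOnes n)ᗮ := by
  have hn : (n : ℝ) ≠ 0 := by exact_mod_cast (Fin.pos i).ne'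
  rw [Submodule.mem_orthogonal_singleton_iff_inner_left, centeredBasisVector, inner_sub_left,
    real_inner_smul_left, inner_single_allOnes, inner_allOnes_allOnes, inv_mul_cancel₀ hn, sub_self]

theorem exists_regular_simplex {d : ℕ} (hd : 0 < d) :
    ∃ x : Fin (d + 1) → EuclideanSpace ℝ (Fin d),
      ∀ i j, ⟪x i, x j⟫ = if i = j then 1 else -1 / (d : ℝ) := by
  have : Fact (finrank ℝ (EuclideanSpace ℝ (Fin (d + 1))) = d + 1) := ⟨finrank_euclideanSpace_fin⟩
  have hones : allOnes (d + 1) ≠ 0 := fun h => by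
    have := inner_allOnes_allOnes (d + 1)
    rw [h, inner_zero_left] at this
    norm_cast at this
  -- rescale so that the vertices become unit vectors: `‖centeredBasisVector‖ ^ 2 = d / (d + 1)`
  obtain ⟨x, hx⟩ := exists_euclidean_gram_eq _
    (Submodule.finrank_orthogonal_span_singleton (n := d) hones)
    (y := fun i => √((d + 1) / d) • centeredBasisVector (d + 1) i)
    fun i => Submodule.smul_mem _ _ (centeredBasisVector_mem_orthogonal i)
  refine ⟨x, fun i j => ?_⟩
  have hd' : (0 : ℝ) < d := by exact_mod_cast hd
  rw [hx, real_inner_smul_left, real_inner_smul_right, inner_centeredBasisVector, ← mul_assoc,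
    Real.mul_self_sqrt (by positivity)]
  split_ifs <;> push_cast <;> field_simp <;> ring

end Simplex

theorem stmt_3 (d : ℕ) (hd : 0 < d) :
    (∃ x : Fin (d + 1) → EuclideanSpace ℝ (Fin d),
      (∀ i, ‖x i‖ = 1) ∧ ∀ i j, i ≠ j → |⟪x i, x j⟫| ≤ 1 / (d : ℝ)) ∧
    (∀ x : Fin (d + 1) → EuclideanSpace ℝ (Fin d),
      (∀ i, ‖x i‖ = 1) → ∃ i j, i ≠ j ∧ 1 / (d : ℝ) ≤ |⟪x i, x j⟫|) := by
  refine ⟨?_, fun x hx => exists_ne_inv_finrank_le_abs_inner hd finrank_euclideanSpace_fin hx⟩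
  obtain ⟨x, hx⟩ := exists_regular_simplex hd
  refine ⟨x, fun i => ?_, fun i j hij => ?_⟩
  · have hii := hx i i
    rwa [if_pos rfl, real_inner_self_eq_norm_sq, pow_eq_one_iff_of_nonneg (norm_nonneg _) two_ne_zero]
      at hii
  · rw [hx, if_neg hij, neg_div, abs_neg, abs_of_nonneg (by positivity)]
end

section
/- Let C be an n×n Hermitian matrix over ℂ with C_{ii} = 1 and |C_{ij}| ≤ 1 for all i,j, whose largest eigenvalue λ has multiplicity k, and let d be a positive integer with d ≡ -k (mod n), say d = nb - k with b ≥ 1. Then the matrix A := (1+ε)I_{nb} - ε(C ⊗ J_b), where ε = 1/(bλ-1) and J_b is the b×b all-ones matrix, is Hermitian positive semidefinite of rank at most d, has all diagonal entries equal to 1, and all off-diagonal entries of absolute value at most ε = n/(λ(d+k) - n). -/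
open Matrix Module
open scoped Kronecker ComplexOrder

/-!
The diagonal of `C` gives `tr C = n`, so the eigenvalues of `C` average `1`: hence `λ ≥ 1`, and
`bλ > 1` unless `b = 1` and every eigenvalue equals `λ = 1`, which would force `k = n` and `d = 0`.
With `ε (bλ - 1) = 1` one has
`A = ε (λ (I ⊗ (b I - J)) + (λ I - C) ⊗ J)`,
a nonnegative combination of Kronecker products of positive semidefinite matrices (`J` and
`b I - J` are Hermitian and square to `b` times themselves). If `C v = λ v` then
`A (v ⊗ 1) = ((1 + ε) - ε b λ) (v ⊗ 1) = 0`, so the `λ`-eigenspace of `C` lifts to a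
`k`-dimensional subspace of `ker A`, and `rank A ≤ n b - k = d`.
-/

namespace Matrix.IsHermitian

variable {𝕜 n : Type*} [RCLike 𝕜] [Fintype n] {C : Matrix n n 𝕜}

lemma posSemidef_of_mul_self_eq_nsmul (hC : C.IsHermitian) {c : ℕ} (hc : 0 < c)
    (hCC : C * C = c • C) : C.PosSemidef := by
  have h := (posSemidef_conjTranspose_mul_self C).smul (inv_nonneg.mpr (c.cast_nonneg (α := ℝ)))
  rwa [hC.eq, hCC, ← Nat.cast_smul_eq_nsmul ℝ, inv_smul_smul₀ (by positivity)] at h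

variable [DecidableEq n] (hC : C.IsHermitian)

lemma sum_eigenvalues_eq_card (hdiag : ∀ i, C i i = 1) :
    ∑ i, hC.eigenvalues i = Fintype.card n := by
  have h := hC.trace_eq_sum_eigenvalues
  simp only [trace, diag, hdiag, Finset.sum_const, Finset.card_univ, nsmul_eq_mul, mul_one] at h
  exact_mod_cast h.symm

lemma one_le_of_eigenvalues_le [Nonempty n] (hdiag : ∀ i, C i i = 1) {lam : ℝ}
    (hmax : ∀ i, hC.eigenvalues i ≤ lam) : 1 ≤ lam := by
  have hcard : (0 : ℝ) < Fintype.card n := by exact_mod_cast Fintype.card_pos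
  have : (Fintype.card n : ℝ) ≤ Fintype.card n * lam := by
    calc (Fintype.card n : ℝ) = ∑ i, hC.eigenvalues i := (hC.sum_eigenvalues_eq_card hdiag).symm
      _ ≤ ∑ _i : n, lam := Finset.sum_le_sum fun i _ => hmax i
      _ = Fintype.card n * lam := by simp
  nlinarith

lemma card_eigenvalues_eq_of_le_one (hdiag : ∀ i, C i i = 1) {lam : ℝ}
    (hmax : ∀ i, hC.eigenvalues i ≤ lam) (hlam : lam ≤ 1) :
    Fintype.card {i // hC.eigenvalues i = lam} = Fintype.card n := by
  have hsum : ∑ i, hC.eigenvalues i = ∑ _i : n, lam := by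
    refine le_antisymm (Finset.sum_le_sum fun i _ => hmax i) ?_
    rw [hC.sum_eigenvalues_eq_card hdiag]
    simpa using mul_le_of_le_one_right (Nat.cast_nonneg _) hlam
  have hall : ∀ i, hC.eigenvalues i = lam := fun i =>
    (Finset.sum_eq_sum_iff_of_le fun i _ => hmax i).mp hsum i (Finset.mem_univ i)
  exact Fintype.card_congr (Equiv.subtypeUnivEquiv hall)

lemma posSemidef_smul_one_sub {lam : ℝ} (hmax : ∀ i, hC.eigenvalues i ≤ lam) :
    ((lam : 𝕜) • 1 - C).PosSemidef := by
  have hshift : ((lam : 𝕜) • 1 - C).IsHermitian := by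
    simp [IsHermitian, conjTranspose_sub, hC.eq]
  rw [hshift.posSemidef_iff_eigenvalues_nonneg]
  intro i
  have hi := hshift.eigenvalues_mem_spectrum_real i
  generalize hshift.eigenvalues i = μ at hi ⊢
  rw [← RCLike.real_smul_eq_coe_smul, ← Algebra.algebraMap_eq_smul_one,
    ← spectrum.singleton_sub_eq, hC.spectrum_real_eq_range_eigenvalues] at hi
  obtain ⟨_, rfl, _, ⟨j, rfl⟩, hj⟩ := hi
  simp only [Pi.zero_apply, ← hj, sub_nonneg]
  exact hmax j

lemma one_lt_natCast_mul_of_card_lt (hdiag : ∀ i, C i i = 1) {lam : ℝ}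
    (hmax : ∀ i, hC.eigenvalues i ≤ lam) {b : ℕ}
    (hcard : Fintype.card {i // hC.eigenvalues i = lam} < Fintype.card n * b) :
    1 < (b : ℝ) * lam := by
  have : Nonempty n := Fintype.card_pos_iff.mp (Nat.pos_of_ne_zero fun h => by simp [h] at hcard)
  have hlam := hC.one_le_of_eigenvalues_le hdiag hmax
  rcases b with _ | _ | b
  · simp at hcard
  · by_contra! hle
    have := hC.card_eigenvalues_eq_of_le_one hdiag hmax (by simpa using hle)
    omega
  · push_cast
    nlinarith

end Matrix.IsHermitian

namespace Matrix

variable {R m n l l' ι : Type*}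

lemma sub_kronecker [NonUnitalNonAssocRing R] (A₁ A₂ : Matrix m n R) (B : Matrix l l' R) :
    (A₁ - A₂) ⊗ₖ B = A₁ ⊗ₖ B - A₂ ⊗ₖ B := by
  ext
  simp [sub_mul]

lemma kronecker_sub [NonUnitalNonAssocRing R] (A : Matrix m n R) (B₁ B₂ : Matrix l l' R) :
    A ⊗ₖ (B₁ - B₂) = A ⊗ₖ B₁ - A ⊗ₖ B₂ := by
  ext
  simp [mul_sub]

lemma of_one_mul_of_one [NonAssocSemiring R] [Fintype l] :
    (of fun _ _ => 1 : Matrix m l R) * (of fun _ _ => 1 : Matrix l n R) =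
      Fintype.card l • (of fun _ _ => 1 : Matrix m n R) := by
  ext i j
  simp [mul_apply]

lemma kronecker_of_one_mulVec_comp_fst [CommSemiring R] [Fintype n] [Fintype l']
    (M : Matrix m n R) (v : n → R) :
    (M ⊗ₖ (of fun _ _ => 1 : Matrix l l' R)) *ᵥ (fun p => v p.1) =
      fun p => Fintype.card l' • (M *ᵥ v) p.1 := by
  ext ⟨i, s⟩
  simp [mulVec, dotProduct, Fintype.sum_prod_type, Finset.mul_sum]

lemma rank_add_card_le_of_linearIndependent [Field R] [Fintype n] [Fintype ι]
    (A : Matrix m n R) {w : ι → n → R} (hw : LinearIndependent R w) (hker : ∀ i, A *ᵥ w i = 0) :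
    A.rank + Fintype.card ι ≤ Fintype.card n := by
  have hspan : Submodule.span R (Set.range w) ≤ LinearMap.ker A.mulVecLin :=
    Submodule.span_le.mpr (by rintro _ ⟨i, rfl⟩; exact hker i)
  have hcard : Fintype.card ι ≤ finrank R (LinearMap.ker A.mulVecLin) :=
    (finrank_span_eq_card hw).symm.trans_le (Submodule.finrank_mono hspan)
  have := LinearMap.finrank_range_add_finrank_ker A.mulVecLin
  rw [Module.finrank_fintype_fun_eq_card] at this
  exact (Nat.add_le_add_left hcard _).trans this.le

end Matrix

section

variable {m l : Type*} [DecidableEq m] [Fintype l] [DecidableEq l]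
  {C : Matrix m m ℂ} {eps lam : ℝ}

lemma smul_one_sub_smul_kronecker_of_one_eq (C : Matrix m m ℂ)
    (hkey : eps * (Fintype.card l * lam) = 1 + eps) :
    ((1 + eps : ℝ) : ℂ) • (1 : Matrix (m × l) (m × l) ℂ)
        - ((eps : ℝ) : ℂ) • (C ⊗ₖ (of fun _ _ => 1 : Matrix l l ℂ)) =
      ((eps : ℝ) : ℂ) • ((lam : ℂ) • ((1 : Matrix m m ℂ) ⊗ₖ
          ((Fintype.card l : ℂ) • 1 - of fun _ _ => 1)) +
        ((lam : ℂ) • 1 - C) ⊗ₖ (of fun _ _ => 1 : Matrix l l ℂ)) := by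
  have hkeyC : (eps : ℂ) * ((Fintype.card l : ℂ) * lam) = 1 + eps := by exact_mod_cast hkey
  simp only [kronecker_sub, sub_kronecker, kronecker_smul, smul_kronecker, one_kronecker_one]
  push_cast
  linear_combination (norm := module) hkeyC.symm • (1 : Matrix (m × l) (m × l) ℂ)

lemma posSemidef_smul_one_sub_smul_kronecker_of_one [Fintype m] [Nonempty l]
    (hC : C.IsHermitian) (hmax : ∀ i, hC.eigenvalues i ≤ lam) (hlam : 0 ≤ lam) (heps : 0 ≤ eps)
    (hkey : eps * (Fintype.card l * lam) = 1 + eps) :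
    (((1 + eps : ℝ) : ℂ) • (1 : Matrix (m × l) (m × l) ℂ)
        - ((eps : ℝ) : ℂ) • (C ⊗ₖ (of fun _ _ => 1 : Matrix l l ℂ))).PosSemidef := by
  set J : Matrix l l ℂ := of fun _ _ => 1
  have hJ : J.IsHermitian := by
    ext
    simp [J]
  have hJJ : J * J = Fintype.card l • J := of_one_mul_of_one
  have hK : ((Fintype.card l : ℂ) • 1 - J).PosSemidef := by
    refine IsHermitian.posSemidef_of_mul_self_eq_nsmul ?_ (Fintype.card_pos (α := l)) ?_
    · simp [IsHermitian, conjTranspose_sub, hJ.eq]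
    · simp only [sub_mul, mul_sub, mul_smul_comm, smul_mul_assoc, one_mul, mul_one, hJJ]
      module
  rw [smul_one_sub_smul_kronecker_of_one_eq C hkey]
  refine .smul (.add (.smul (PosSemidef.one.kronecker hK) ?_)
    ((hC.posSemidef_smul_one_sub hmax).kronecker
      (hJ.posSemidef_of_mul_self_eq_nsmul Fintype.card_pos hJJ))) ?_
  · exact_mod_cast hlam
  · exact_mod_cast heps

lemma rank_smul_one_sub_smul_kronecker_of_one_add_card_le [Fintype m] [Nonempty l]
    (hC : C.IsHermitian) (hkey : eps * (Fintype.card l * lam) = 1 + eps) :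
    rank (((1 + eps : ℝ) : ℂ) • (1 : Matrix (m × l) (m × l) ℂ)
        - ((eps : ℝ) : ℂ) • (C ⊗ₖ (of fun _ _ => 1 : Matrix l l ℂ))) +
      Fintype.card {i // hC.eigenvalues i = lam} ≤ Fintype.card m * Fintype.card l := by
  let lift : EuclideanSpace ℂ m →ₗ[ℂ] (m × l → ℂ) :=
    LinearMap.funLeft ℂ ℂ Prod.fst ∘ₗ (WithLp.linearEquiv 2 ℂ (m → ℂ)).toLinearMap
  have hlift : LinearMap.ker lift = ⊥ := by
    refine LinearMap.ker_eq_bot.mpr ((LinearMap.funLeft_injective_of_surjective ℂ ℂ _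
      (Prod.fst_surjective (β := l))).comp (WithLp.linearEquiv 2 ℂ (m → ℂ)).injective)
  have hw : LinearIndependent ℂ fun i : {i // hC.eigenvalues i = lam} =>
      lift (hC.eigenvectorBasis i) :=
    (hC.eigenvectorBasis.orthonormal.linearIndependent.comp _ Subtype.val_injective).map' _ hlift
  have hkeyC : (eps : ℂ) * ((Fintype.card l : ℂ) * lam) = 1 + eps := by exact_mod_cast hkey
  refine (rank_add_card_le_of_linearIndependent _ hw fun i => ?_).trans_eq (by simp)
  have hv := hC.mulVec_eigenvectorBasis i
  rw [i.2] at hv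
  change _ *ᵥ (fun p : m × l => hC.eigenvectorBasis i p.1) = 0
  rw [sub_mulVec, smul_mulVec, smul_mulVec, one_mulVec, kronecker_of_one_mulVec_comp_fst, hv]
  ext p
  simp only [Complex.ofReal_add, Complex.ofReal_one, Pi.smul_apply, Complex.real_smul, nsmul_eq_mul,
    Complex.coe_smul, Pi.sub_apply, smul_eq_mul, Pi.zero_apply]
  linear_combination (hC.eigenvectorBasis i p.1) * hkeyC.symm

end

theorem stmt_9_general (n k b d : ℕ) (hd : 0 < d)
    (hdk : d + k = n * b)
    (C : Matrix (Fin n) (Fin n) ℂ) (hC : C.IsHermitian)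
    (hdiag : ∀ i, C i i = 1) (hbd : ∀ i j, ‖C i j‖ ≤ 1)
    (lam : ℝ)
    (hmax : ∀ i, hC.eigenvalues i ≤ lam)
    (hmult : Fintype.card {i // hC.eigenvalues i = lam} = k)
    (eps : ℝ) (heps : eps = 1 / ((b : ℝ) * lam - 1))
    (A : Matrix (Fin n × Fin b) (Fin n × Fin b) ℂ)
    (hA : A = ((1 + eps : ℝ) : ℂ) • (1 : Matrix (Fin n × Fin b) (Fin n × Fin b) ℂ)
        - ((eps : ℝ) : ℂ) • (C ⊗ₖ (Matrix.of fun _ _ => (1 : ℂ) : Matrix (Fin b) (Fin b) ℂ))) :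
    A.IsHermitian ∧ A.PosSemidef ∧ A.rank ≤ d ∧
    (∀ p, A p p = 1) ∧
    (∀ p q, p ≠ q → ‖A p q‖ ≤ eps) ∧
    eps = (n : ℝ) / (lam * ((d : ℝ) + (k : ℝ)) - (n : ℝ)) := by
  have hcard : Fintype.card {i // hC.eigenvalues i = lam} < Fintype.card (Fin n) * b := by
    rw [Fintype.card_fin]
    omega
  have hblam : 1 < (b : ℝ) * lam := hC.one_lt_natCast_mul_of_card_lt hdiag hmax hcard
  have hlam : 0 < lam := pos_of_mul_pos_right (one_pos.trans hblam) b.cast_nonneg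
  have heps_pos : 0 < eps := by
    rw [heps]
    exact one_div_pos.mpr (sub_pos.mpr hblam)
  have hkey : eps * (Fintype.card (Fin b) * lam) = 1 + eps := by
    rw [heps, Fintype.card_fin]
    field_simp [(sub_pos.mpr hblam).ne']
    ring
  have : Nonempty (Fin b) :=
    Fin.pos_iff_nonempty.mp (Nat.pos_of_ne_zero fun h => by simp [h] at hcard)
  have hpsd : A.PosSemidef := hA ▸
    posSemidef_smul_one_sub_smul_kronecker_of_one hC hmax hlam.le heps_pos.le hkey
  have hrank := rank_smul_one_sub_smul_kronecker_of_one_add_card_le hC hkey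
  rw [← hA, hmult, Fintype.card_fin, Fintype.card_fin] at hrank
  refine ⟨hpsd.isHermitian, hpsd, by omega, fun p => ?_, fun p q hpq => ?_, ?_⟩
  · simp [hA, one_apply, hdiag]
  · have hApq : A p q = -(eps * C p.1 q.1) := by
      simp [hA, one_apply_ne hpq]
    rw [hApq, norm_neg, norm_mul, Complex.norm_real, Real.norm_of_nonneg heps_pos.le]
    exact mul_le_of_le_one_right heps_pos.le (hbd _ _)
  · have hn : (n : ℝ) ≠ 0 := Nat.cast_ne_zero.mpr fun h => by simp [h] at hcard
    rw [heps, show ((d : ℝ) + k) = n * b by exact_mod_cast hdk]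
    field_simp

theorem stmt_9 (n k b d : ℕ) (hn : 0 < n) (hk : 0 < k) (hb : 1 ≤ b) (hd : 0 < d)
    (hdk : d + k = n * b)
    (C : Matrix (Fin n) (Fin n) ℂ) (hC : C.IsHermitian)
    (hdiag : ∀ i, C i i = 1) (hbd : ∀ i j, ‖C i j‖ ≤ 1)
    (lam : ℝ)
    (hmax : ∀ i, hC.eigenvalues i ≤ lam)
    (hmult : Fintype.card {i // hC.eigenvalues i = lam} = k)
    (eps : ℝ) (heps : eps = 1 / ((b : ℝ) * lam - 1))
    (A : Matrix (Fin n × Fin b) (Fin n × Fin b) ℂ)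
    (hA : A = ((1 + eps : ℝ) : ℂ) • (1 : Matrix (Fin n × Fin b) (Fin n × Fin b) ℂ)
        - ((eps : ℝ) : ℂ) • (C ⊗ₖ (Matrix.of fun _ _ => (1 : ℂ) : Matrix (Fin b) (Fin b) ℂ))) :
    A.IsHermitian ∧ A.PosSemidef ∧ A.rank ≤ d ∧
    (∀ p, A p p = 1) ∧
    (∀ p q, p ≠ q → ‖A p q‖ ≤ eps) ∧
    eps = (n : ℝ) / (lam * ((d : ℝ) + (k : ℝ)) - (n : ℝ)) :=
  stmt_9_general n k b d hd hdk C hC hdiag hbd lam hmax hmult eps heps A hA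
end

section
/- Let B_1, ..., B_ℓ be mutually unbiased bases of ℂ^k and set C = √k(A^*A - I_{kℓ}) + I_{kℓ} where A = [B_1|...|B_ℓ]. Then C is Hermitian with all diagonal entries 1 and all entries of absolute value at most 1, and its largest eigenvalue is √k(ℓ-1)+1 with multiplicity k. -/
/-!
Write `G = AᴴA` for the Gram matrix of the concatenated bases. Since each `Bᵢ` is unitary,
`AAᴴ = ℓ I`, hence `G² = ℓ G`, and `C = √k (G - I) + I` is annihilated by `(X - μ)(X - ν)` with
`μ = √k (ℓ - 1) + 1` and `ν = 1 - √k`. So every eigenvalue of `C` is `μ` or `ν`, and the multiplicity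
of `μ` is read off from `tr C = kℓ`, the diagonal of `C` being `1`. The entries of `G` off the
diagonal vanish within a block and have modulus `1/√k` across blocks, which bounds those of `C`.
-/

open Matrix Finset

theorem Fintype.card_filter_eq_mul_sub_of_forall_eq_or_eq {ι R : Type*} [Fintype ι] [Ring R]
    [DecidableEq R] {f : ι → R} {μ ν : R} (hf : ∀ i, f i = μ ∨ f i = ν) :
    #{i | f i = μ} * (μ - ν) = ∑ i, f i - Fintype.card ι * ν := by
  have hsum : ∑ i, f i = #{i | f i = μ} * μ + #{i | f i ≠ μ} * ν := by
    rw [← sum_filter_add_sum_filter_not univ (fun i => f i = μ),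
      Finset.sum_congr rfl fun i hi => (mem_filter.mp hi).2,
      Finset.sum_congr rfl fun i hi => (hf i).resolve_left (mem_filter.mp hi).2]
    simp only [sum_const, nsmul_eq_mul]
  have hcard : (#{i | f i = μ} + #{i | f i ≠ μ} : R) = Fintype.card ι := by
    rw [← Nat.cast_add, card_filter_add_card_filter_not, card_univ]
  rw [hsum, ← hcard]
  noncomm_ring

namespace Matrix

variable {ι m n R : Type*}

theorem conjTranspose_mul_self_of_blocks_apply [Fintype m] [NonUnitalSemiring R] [StarRing R]
    {B : ι → Matrix m n R} {A : Matrix m (ι × n) R} (hA : A = of fun a p => B p.1 a p.2)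
    (p q : ι × n) : (Aᴴ * A) p q = ((B p.1)ᴴ * B q.1) p.2 q.2 := by
  simp [hA, mul_apply]

theorem mul_conjTranspose_self_of_blocks [Fintype ι] [Fintype n] [NonUnitalSemiring R]
    [StarRing R] {B : ι → Matrix m n R} {A : Matrix m (ι × n) R}
    (hA : A = of fun a p => B p.1 a p.2) :
    A * Aᴴ = ∑ i, B i * (B i)ᴴ := by
  ext a b
  simp [hA, mul_apply, Fintype.sum_prod_type, Matrix.sum_apply]

theorem norm_conjTranspose_mul_self_of_blocks_apply_le [Fintype n] [DecidableEq n]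
    {𝕜 : Type*} [RCLike 𝕜] {B : ι → Matrix n n 𝕜} {A : Matrix n (ι × n) 𝕜}
    (hA : A = of fun a p => B p.1 a p.2) (horth : ∀ i, (B i)ᴴ * B i = 1) {c : ℝ} (hc : 0 ≤ c)
    (hunb : ∀ i j, i ≠ j → ∀ a b, ‖((B i)ᴴ * B j) a b‖ = c) {p q : ι × n} (hpq : p ≠ q) :
    ‖(Aᴴ * A) p q‖ ≤ c := by
  rw [conjTranspose_mul_self_of_blocks_apply hA]
  by_cases hblock : p.1 = q.1
  · rw [hblock, horth, one_apply_ne fun h => hpq (Prod.ext hblock h), norm_zero]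
    exact hc
  · exact (hunb _ _ hblock _ _).le

theorem conjTranspose_mul_self_mul_self [Fintype m] [Fintype n] [CommSemiring R] [StarRing R]
    [DecidableEq m] {A : Matrix m n R} {c : R} (h : A * Aᴴ = c • 1) :
    Aᴴ * A * (Aᴴ * A) = c • (Aᴴ * A) := by
  rw [Matrix.mul_assoc, ← Matrix.mul_assoc A, h, smul_mul, Matrix.one_mul, Matrix.mul_smul]

theorem sub_smul_one_mul_sub_smul_one_eq_zero_of_mul_self_eq_smul [Fintype n] [DecidableEq n] [CommRing R]
    {G : Matrix n n R} {c : R} (hG : G * G = c • G) (s : R) :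
    (s • (G - 1) + 1 - (s * (c - 1) + 1) • 1) * (s • (G - 1) + 1 - (1 - s) • 1) = 0 := by
  have hμ : s • (G - 1) + 1 - (s * (c - 1) + 1) • 1 = s • (G - c • 1) := by module
  have hν : s • (G - 1) + 1 - (1 - s) • 1 = s • G := by module
  rw [hμ, hν, smul_mul_smul_comm, Matrix.sub_mul, hG, smul_mul, Matrix.one_mul, sub_self,
    smul_zero]

namespace IsHermitian

variable {𝕜 : Type*} [RCLike 𝕜] [Fintype n] [DecidableEq n] {C : Matrix n n 𝕜}

theorem eigenvalues_eq_or_eq (hC : C.IsHermitian) {μ ν : ℝ}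
    (h : (C - (μ : 𝕜) • 1) * (C - (ν : 𝕜) • 1) = 0) (i : n) :
    hC.eigenvalues i = μ ∨ hC.eigenvalues i = ν := by
  set v : n → 𝕜 := ⇑(hC.eigenvectorBasis i)
  have hv : C *ᵥ v = (hC.eigenvalues i : 𝕜) • v := by
    rw [hC.mulVec_eigenvectorBasis i, RCLike.real_smul_eq_coe_smul (K := 𝕜)]
  have hv0 : v ≠ 0 := (WithLp.ofLp_eq_zero 2).ne.2 (hC.eigenvectorBasis.orthonormal.ne_zero i)
  have : (((hC.eigenvalues i - μ) * (hC.eigenvalues i - ν) : ℝ) : 𝕜) • v = 0 := by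
    rw [← zero_mulVec v, ← h, ← mulVec_mulVec]
    simp only [sub_mulVec, smul_mulVec, one_mulVec, mulVec_sub, mulVec_smul, hv, smul_sub,
      smul_smul]
    push_cast
    module
  rcases mul_eq_zero.mp (RCLike.ofReal_eq_zero.mp ((smul_eq_zero.mp this).resolve_right hv0))
    with h | h
  · exact .inl (sub_eq_zero.mp h)
  · exact .inr (sub_eq_zero.mp h)

theorem sum_eigenvalues_eq_card_of_diag_eq_one (hC : C.IsHermitian) (hdiag : ∀ i, C i i = 1) :
    ∑ i, hC.eigenvalues i = Fintype.card n := by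
  apply RCLike.ofReal_injective (K := 𝕜)
  push_cast
  rw [← hC.trace_eq_sum_eigenvalues]
  simp [trace, hdiag]

end IsHermitian

end Matrix

theorem stmt_11 (k l : ℕ) (hk : 0 < k) (hl : 0 < l)
    (B : Fin l → Matrix (Fin k) (Fin k) ℂ)
    (horth : ∀ i, (B i)ᴴ * B i = 1)
    (hunb : ∀ i j, i ≠ j → ∀ a b, ‖((B i)ᴴ * B j) a b‖ = 1 / Real.sqrt k)
    (A : Matrix (Fin k) (Fin l × Fin k) ℂ)
    (hA : A = Matrix.of fun a p => B p.1 a p.2)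
    (C : Matrix (Fin l × Fin k) (Fin l × Fin k) ℂ)
    (hC : C = ((Real.sqrt k : ℝ) : ℂ) • (Aᴴ * A - 1) + 1) :
    (∀ p, C p p = 1) ∧ (∀ p q, ‖C p q‖ ≤ 1) ∧
    ∃ hherm : C.IsHermitian,
      (∀ i, hherm.eigenvalues i ≤ Real.sqrt k * ((l : ℝ) - 1) + 1) ∧
      Fintype.card {i // hherm.eigenvalues i = Real.sqrt k * ((l : ℝ) - 1) + 1} = k := by
  set s := Real.sqrt k
  have hs : 0 < s := Real.sqrt_pos.mpr (by positivity)
  have hAA : A * Aᴴ = (l : ℂ) • 1 := by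
    simp [mul_conjTranspose_self_of_blocks hA, fun i => mul_eq_one_comm.mp (horth i),
      Nat.cast_smul_eq_nsmul]
  have hCapply (p q) :
      C p q = s * ((Aᴴ * A) p q - (1 : Matrix _ _ ℂ) p q) + (1 : Matrix _ _ ℂ) p q := by
    simp [hC]
  have hdiag (p) : C p p = 1 := by
    simp [hCapply, conjTranspose_mul_self_of_blocks_apply hA, horth]
  have hherm : C.IsHermitian := hC ▸ (((isHermitian_conjTranspose_mul_self A).sub
    isHermitian_one).smul (Complex.conj_ofReal s)).add isHermitian_one
  refine ⟨hdiag, fun p q => ?_, hherm, ?_⟩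
  · rcases eq_or_ne p q with rfl | hpq
    · simp [hdiag]
    rw [hCapply, one_apply_ne hpq, sub_zero, add_zero, norm_mul, Complex.norm_real,
      Real.norm_of_nonneg hs.le, ← mul_one_div_cancel hs.ne']
    gcongr
    exact norm_conjTranspose_mul_self_of_blocks_apply_le hA horth (by positivity) hunb hpq
  set μ : ℝ := s * ((l : ℝ) - 1) + 1 with hμ
  set ν : ℝ := 1 - s with hν
  have hquad : (C - (μ : ℂ) • 1) * (C - (ν : ℂ) • 1) = 0 := by
    rw [hC, hμ, hν]
    push_cast
    exact sub_smul_one_mul_sub_smul_one_eq_zero_of_mul_self_eq_smul (conjTranspose_mul_self_mul_self hAA) _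
  have heig := hherm.eigenvalues_eq_or_eq (μ := μ) (ν := ν) hquad
  have hνμ : ν ≤ μ := by nlinarith
  refine ⟨fun i => (heig i).elim le_of_eq fun h => h ▸ hνμ, ?_⟩
  have hcount := Fintype.card_filter_eq_mul_sub_of_forall_eq_or_eq heig
  rw [hherm.sum_eigenvalues_eq_card_of_diag_eq_one hdiag, Fintype.card_prod, Fintype.card_fin,
    Fintype.card_fin, hμ, hν] at hcount
  rw [Fintype.card_subtype]
  have : (#{i | hherm.eigenvalues i = μ} : ℝ) * (s * l) = k * (s * l) := by
    push_cast at hcount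
    linear_combination hcount
  exact_mod_cast mul_right_cancel₀ (by positivity) this
end

section
/- Let μ be an isotropic probability measure on ℝ^k with finite support not containing 0, and suppose every point of the support is a unit vector. If for μ-almost every pair x, y one has |⟨x,y⟩| = 1 when x ∈ {y, -y} and |⟨x,y⟩| = β otherwise, and if E_{x,y∼μ}|⟨x,y⟩| = β + (1-β)/N, then the support of μ, viewed projectively (identifying ±x), consists of at least N distinct lines forming an equiangular system with common angle β, and μ(x)+μ(-x) = 1/N for each such line. -/
/-!
The Gram values `|⟪x, y⟫|` are `1` on a line `{x, -x}` and `β` off it, so every average against `p`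
is affine in the line mass `lineMass S p y`. Evaluating isotropy at a support point `y` gives
`β² + (1 - β²) · lineMass S p y = 1/k`; as `β² < 1`, all lines carry the same mass. The mean of
`|⟪x, y⟫|` is then `β + (1 - β)` times that mass, so the mass is `1/N`; since the lines partition
the support, whose total mass is `1`, there are exactly `N` of them.
-/

open scoped RealInnerProductSpace
open Classical Finset

theorem Finset.sum_mul_eq_of_two_valued {ι : Type*} (s : Finset ι) (P : ι → Prop)
    [DecidablePred P] (w f : ι → ℝ) (a b : ℝ) (ha : ∀ i ∈ s, P i → f i = a)
    (hb : ∀ i ∈ s, ¬P i → f i = b) :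
    ∑ i ∈ s, w i * f i = b * ∑ i ∈ s, w i + (a - b) * ∑ i ∈ s.filter P, w i := by
  have hP : ∑ i ∈ s.filter P, w i * f i = a * ∑ i ∈ s.filter P, w i := by
    rw [mul_sum]
    exact sum_congr rfl fun i hi => by rw [ha i (mem_filter.1 hi).1 (mem_filter.1 hi).2, mul_comm]
  have hnP : ∑ i ∈ s.filter (¬P ·), w i * f i = b * ∑ i ∈ s.filter (¬P ·), w i := by
    rw [mul_sum]
    exact sum_congr rfl fun i hi => by rw [hb i (mem_filter.1 hi).1 (mem_filter.1 hi).2, mul_comm]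
  rw [← sum_filter_add_sum_filter_not s P, hP, hnP, ← sum_filter_add_sum_filter_not s P w]
  ring

theorem eq_or_eq_neg_comm {E : Type*} [InvolutiveNeg E] {x y : E} :
    y = x ∨ y = -x ↔ x = y ∨ x = -y := by
  constructor <;> rintro (rfl | rfl) <;> simp

section Lines

variable {E : Type*} [DecidableEq E]

def lineClass [Neg E] (S : Finset E) (x : E) : Finset E :=
  S.filter fun z => z = x ∨ z = -x

def lineMass [Neg E] (S : Finset E) (p : E → ℝ) (x : E) : ℝ :=
  ∑ z ∈ lineClass S x, p z

theorem exists_line_representatives [AddCommGroup E] (S : Finset E) :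
    ∃ T ⊆ S, (∀ z ∈ S, ∃ x ∈ T, z = x ∨ z = -x) ∧ ∀ x ∈ T, ∀ y ∈ T, x ≠ y → y ≠ -x := by
  induction S using Finset.strongInduction with
  | _ S ih =>
  rcases S.eq_empty_or_nonempty with rfl | ⟨x, hx⟩
  · exact ⟨∅, by simp⟩
  obtain ⟨T, hTS, hcover, hsep⟩ :=
    ih ((S.erase x).erase (-x)) ((erase_subset _ _).trans_ssubset (erase_ssubset hx))
  have hT : ∀ y ∈ T, y ≠ -x ∧ y ≠ x ∧ y ∈ S := fun y hy => by simpa using hTS hy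
  refine ⟨insert x T, insert_subset hx fun y hy => (hT y hy).2.2, fun z hz => ?_, ?_⟩
  · by_cases hzx : z = x ∨ z = -x
    · exact ⟨x, mem_insert_self _ _, hzx⟩
    · obtain ⟨hzx, hzx'⟩ := not_or.1 hzx
      obtain ⟨y, hy, hzy⟩ := hcover z (by simp [hz, hzx, hzx'])
      exact ⟨y, mem_insert_of_mem hy, hzy⟩
  · intro a ha b hb hab
    rcases mem_insert.1 ha with ha | ha <;> rcases mem_insert.1 hb with hb | hb
    · exact absurd (ha.trans hb.symm) hab
    · exact ha ▸ (hT b hb).1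
    · exact hb ▸ fun h => (hT a ha).1 (by rw [h, neg_neg])
    · exact hsep a ha b hb hab

theorem sum_lineMass_of_representatives [AddCommGroup E] {S T : Finset E} (p : E → ℝ)
    (hcover : ∀ z ∈ S, ∃ x ∈ T, z = x ∨ z = -x) (hsep : ∀ x ∈ T, ∀ y ∈ T, x ≠ y → y ≠ -x) :
    ∑ x ∈ T, lineMass S p x = ∑ z ∈ S, p z := by
  have hdisj : (T : Set E).PairwiseDisjoint (lineClass S) := by
    intro x hx y hy hxy
    refine disjoint_left.2 fun z hzx hzy => ?_
    rcases (mem_filter.1 hzx).2 with h₁ | h₁ <;> rcases (mem_filter.1 hzy).2 with h₂ | h₂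
    · exact hxy (h₁.symm.trans h₂)
    · exact hsep x hx y hy hxy (by rw [← h₁, h₂, neg_neg])
    · exact hsep x hx y hy hxy (h₂.symm.trans h₁)
    · exact hxy (neg_injective (h₁.symm.trans h₂))
  have hunion : T.biUnion (lineClass S) = S := by
    ext z
    simp only [mem_biUnion, lineClass, mem_filter]
    exact ⟨fun ⟨_, _, hz, _⟩ => hz, fun hz => (hcover z hz).imp fun x ⟨hx, h⟩ => ⟨hx, hz, h⟩⟩
  unfold lineMass
  rw [← sum_biUnion hdisj, hunion]

variable [NormedAddCommGroup E] [InnerProductSpace ℝ E] {S : Finset E} {p : E → ℝ} {β : ℝ}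
  (hsum : ∑ x ∈ S, p x = 1)
  (hpair : ∀ x ∈ S, ∀ y ∈ S,
    (x = y ∨ x = -y → |⟪x, y⟫| = 1) ∧ (x ≠ y ∧ x ≠ -y → |⟪x, y⟫| = β))
include hsum hpair

theorem sum_mul_abs_inner_eq {x : E} (hx : x ∈ S) :
    ∑ y ∈ S, p y * |⟪x, y⟫| = β + (1 - β) * lineMass S p x := by
  rw [sum_mul_eq_of_two_valued S (fun y => y = x ∨ y = -x) p _ 1 β, hsum]
  · simp only [lineMass, lineClass, mul_one]
  · exact fun y hy h => (hpair x hx y hy).1 (eq_or_eq_neg_comm.1 h)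
  · exact fun y hy h => (hpair x hx y hy).2 (not_or.1 (mt eq_or_eq_neg_comm.2 h))

theorem sum_mul_inner_sq_eq {y : E} (hy : y ∈ S) :
    ∑ x ∈ S, p x * ⟪x, y⟫ ^ 2 = β ^ 2 + (1 - β ^ 2) * lineMass S p y := by
  rw [sum_mul_eq_of_two_valued S (fun x => x = y ∨ x = -y) p _ 1 (β ^ 2), hsum]
  · simp only [lineMass, lineClass, mul_one]
  · intro x hx h
    rw [real_inner_comm, ← sq_abs, (hpair y hy x hx).1 (eq_or_eq_neg_comm.1 h), one_pow]
  · intro x hx h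
    rw [real_inner_comm, ← sq_abs, (hpair y hy x hx).2 (not_or.1 (mt eq_or_eq_neg_comm.2 h))]

theorem sum_sum_mul_abs_inner_eq {m : ℝ} (hmass : ∀ x ∈ S, lineMass S p x = m) :
    ∑ x ∈ S, ∑ y ∈ S, p x * p y * |⟪x, y⟫| = β + (1 - β) * m := by
  calc ∑ x ∈ S, ∑ y ∈ S, p x * p y * |⟪x, y⟫|
      = ∑ x ∈ S, p x * (β + (1 - β) * m) := sum_congr rfl fun x hx => by
        rw [← hmass x hx, ← sum_mul_abs_inner_eq hsum hpair hx, mul_sum]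
        simp_rw [mul_assoc]
    _ = β + (1 - β) * m := by rw [← sum_mul, hsum, one_mul]

theorem lineMass_eq_of_isotropic {c : ℝ} (hβ0 : 0 ≤ β) (hβ1 : β < 1)
    (hiso : ∀ v, ∑ x ∈ S, p x * ⟪x, v⟫ ^ 2 = ‖v‖ ^ 2 * c) (hunit : ∀ x ∈ S, ‖x‖ = 1)
    {x y : E} (hx : x ∈ S) (hy : y ∈ S) : lineMass S p x = lineMass S p y := by
  have key : ∀ z ∈ S, β ^ 2 + (1 - β ^ 2) * lineMass S p z = c := fun z hz => by
    rw [← sum_mul_inner_sq_eq hsum hpair hz, hiso, hunit z hz, one_pow, one_mul]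
  have hβ2 : 1 - β ^ 2 ≠ 0 := by nlinarith
  exact mul_left_cancel₀ hβ2 (by linarith [key x hx, key y hy])

end Lines

theorem stmt_13_general (k N : ℕ) (β : ℝ) (hβ0 : 0 ≤ β) (hβ1 : β < 1)
    (S : Finset (EuclideanSpace ℝ (Fin k)))
    (p : EuclideanSpace ℝ (Fin k) → ℝ)
    (hsum : ∑ x ∈ S, p x = 1)
    (hiso : ∀ v : EuclideanSpace ℝ (Fin k),
      ∑ x ∈ S, p x * ⟪x, v⟫ ^ 2 = ‖v‖ ^ 2 / k)
    (hunit : ∀ x ∈ S, ‖x‖ = 1)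
    (hpair : ∀ x ∈ S, ∀ y ∈ S,
      (x = y ∨ x = -y → |⟪x, y⟫| = 1) ∧ (x ≠ y ∧ x ≠ -y → |⟪x, y⟫| = β))
    (hmean : ∑ x ∈ S, ∑ y ∈ S, p x * p y * |⟪x, y⟫| = β + (1 - β) / N) :
    ∃ T : Finset (EuclideanSpace ℝ (Fin k)),
      T ⊆ S ∧ N ≤ T.card ∧
      (∀ x ∈ T, ∀ y ∈ T, x ≠ y → y ≠ -x ∧ |⟪x, y⟫| = β) ∧
      (∀ z ∈ S, ∃ x ∈ T, z = x ∨ z = -x) ∧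
      (∀ x ∈ T, (∑ z ∈ S.filter (fun z => z = x ∨ z = -x), p z) = 1 / N) := by
  obtain ⟨y₀, hy₀⟩ : S.Nonempty := nonempty_of_sum_ne_zero (by rw [hsum]; exact one_ne_zero)
  have hconst : ∀ x ∈ S, lineMass S p x = lineMass S p y₀ := fun x hx =>
    lineMass_eq_of_isotropic hsum hpair hβ0 hβ1 (fun v => (hiso v).trans (div_eq_mul_one_div _ _))
      hunit hx hy₀
  have hmass : ∀ x ∈ S, lineMass S p x = 1 / N := by
    have h := (sum_sum_mul_abs_inner_eq hsum hpair hconst).symm.trans hmean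
    rw [← mul_one_div] at h
    intro x hx
    rw [hconst x hx, mul_left_cancel₀ (sub_ne_zero.2 hβ1.ne') (add_left_cancel h)]
  obtain ⟨T, hTS, hcover, hsep⟩ := exists_line_representatives S
  have hcard : ∑ x ∈ T, lineMass S p x = 1 :=
    (sum_lineMass_of_representatives p hcover hsep).trans hsum
  rw [sum_congr rfl fun x hx => hmass x (hTS hx), sum_const, nsmul_eq_mul, mul_one_div] at hcard
  have hN : (N : ℝ) ≠ 0 := fun h => by simp [h] at hcard
  have hTN : T.card = N := by exact_mod_cast (div_eq_one_iff_eq hN).1 hcard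
  refine ⟨T, hTS, hTN.ge, fun x hx y hy hxy => ⟨hsep x hx y hy hxy, ?_⟩, hcover,
    fun x hx => hmass x (hTS hx)⟩
  exact (hpair x (hTS hx) y (hTS hy)).2 ⟨hxy, fun h => hsep y hy x hx hxy.symm h⟩

theorem stmt_13 (k N : ℕ) (hk : 0 < k) (hN : 0 < N) (β : ℝ) (hβ0 : 0 ≤ β) (hβ1 : β < 1)
    (S : Finset (EuclideanSpace ℝ (Fin k)))
    (p : EuclideanSpace ℝ (Fin k) → ℝ)
    (hpos : ∀ x ∈ S, 0 < p x) (hsum : ∑ x ∈ S, p x = 1)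
    (hiso : ∀ v : EuclideanSpace ℝ (Fin k),
      ∑ x ∈ S, p x * ⟪x, v⟫ ^ 2 = ‖v‖ ^ 2 / k)
    (h0 : (0 : EuclideanSpace ℝ (Fin k)) ∉ S)
    (hunit : ∀ x ∈ S, ‖x‖ = 1)
    (hpair : ∀ x ∈ S, ∀ y ∈ S,
      (x = y ∨ x = -y → |⟪x, y⟫| = 1) ∧ (x ≠ y ∧ x ≠ -y → |⟪x, y⟫| = β))
    (hmean : ∑ x ∈ S, ∑ y ∈ S, p x * p y * |⟪x, y⟫| = β + (1 - β) / N) :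
    ∃ T : Finset (EuclideanSpace ℝ (Fin k)),
      T ⊆ S ∧ N ≤ T.card ∧
      (∀ x ∈ T, ∀ y ∈ T, x ≠ y → y ≠ -x ∧ |⟪x, y⟫| = β) ∧
      (∀ z ∈ S, ∃ x ∈ T, z = x ∨ z = -x) ∧
      (∀ x ∈ T, (∑ z ∈ S.filter (fun z => z = x ∨ z = -x), p z) = 1 / N) :=
  stmt_13_general k N β hβ0 hβ1 S p hsum hiso hunit hpair hmean
end

section
/- Let A ∈ ℂ^{(d+k)×(d+k)} have 1's on the diagonal, rank(A) ≤ d, and let y_1, ..., y_{d+k} ∈ ℂ^k be the rows of a rank-k matrix N with AN = 0. Then for every v ∈ ℂ^k and every index i with ⟨v, y_i⟩ ≠ 0: off(A) ≥ |⟨v,y_i⟩| / Σ_{j≠i} |⟨v,y_j⟩|, where off(A) = max_{i≠j}|A_{ij}|. -/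
/-!
Row `i` of `A * N = 0`, paired with `v`, reads `⟪v, y i⟫ = -∑_{j ≠ i} A i j * ⟪v, y j⟫`, so by the
triangle inequality `‖⟪v, y i⟫‖ ≤ (max_{j ≠ i} ‖A i j‖) * ∑_{j ≠ i} ‖⟪v, y j⟫‖`.
-/

open Matrix Finset

theorem exists_ne_norm_div_sum_le_norm_of_sum_mul_eq_zero {𝕜 ι : Type*} [NormedField 𝕜]
    [Fintype ι] [DecidableEq ι] {c x : ι → 𝕜} {i : ι} (hci : c i = 1)
    (hcx : ∑ j, c j * x j = 0) (hxi : x i ≠ 0) :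
    ∃ j, j ≠ i ∧ ‖x i‖ / ∑ j ∈ univ.erase i, ‖x j‖ ≤ ‖c j‖ := by
  have hxi_eq : x i = -∑ j ∈ univ.erase i, c j * x j := by
    rw [← add_sum_erase _ _ (mem_univ i), hci, one_mul] at hcx
    exact eq_neg_of_add_eq_zero_left hcx
  have hne : (univ.erase i).Nonempty := by
    by_contra hempty
    rw [not_nonempty_iff_eq_empty.mp hempty, sum_empty, neg_zero] at hxi_eq
    exact hxi hxi_eq
  obtain ⟨j₀, hj₀, hmax⟩ := exists_max_image (univ.erase i) (fun j => ‖c j‖) hne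
  refine ⟨j₀, ne_of_mem_erase hj₀, div_le_of_le_mul₀ (sum_nonneg fun _ _ => norm_nonneg _)
    (norm_nonneg _) ?_⟩
  calc ‖x i‖ ≤ ∑ j ∈ univ.erase i, ‖c j‖ * ‖x j‖ := by
        rw [hxi_eq, norm_neg]
        exact (norm_sum_le _ _).trans_eq (sum_congr rfl fun j _ => norm_mul _ _)
    _ ≤ ∑ j ∈ univ.erase i, ‖c j₀‖ * ‖x j‖ :=
        sum_le_sum fun j hj => mul_le_mul_of_nonneg_right (hmax j hj) (norm_nonneg _)
    _ = ‖c j₀‖ * ∑ j ∈ univ.erase i, ‖x j‖ := (mul_sum _ _ _).symm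

theorem inner_rows_eq_mulVec_star {𝕜 ι κ : Type*} [RCLike 𝕜] [Fintype κ]
    (N : Matrix ι κ 𝕜) (y : ι → EuclideanSpace 𝕜 κ) (hy : ∀ i a, y i a = N i a)
    (v : EuclideanSpace 𝕜 κ) :
    (fun j => inner 𝕜 v (y j)) = N *ᵥ star (WithLp.ofLp v) := by
  ext j
  rw [EuclideanSpace.inner_eq_star_dotProduct]
  exact congrArg (· ⬝ᵥ star (WithLp.ofLp v)) (funext (hy j))

theorem stmt_14_general (d k : ℕ)
    (A : Matrix (Fin (d + k)) (Fin (d + k)) ℂ)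
    (hdiag : ∀ i, A i i = 1)
    (N : Matrix (Fin (d + k)) (Fin k) ℂ) (hAN : A * N = 0)
    (y : Fin (d + k) → EuclideanSpace ℂ (Fin k)) (hy : ∀ i a, y i a = N i a)
    (v : EuclideanSpace ℂ (Fin k)) (i : Fin (d + k))
    (hvi : (inner ℂ v (y i) : ℂ) ≠ 0) :
    ∃ a b, a ≠ b ∧
      ‖(inner ℂ v (y i) : ℂ)‖ /
        (∑ j ∈ Finset.univ.erase i, ‖(inner ℂ v (y j) : ℂ)‖) ≤
      ‖A a b‖ := by
  have hrow : ∑ j, A i j * inner ℂ v (y j) = 0 := by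
    have h := congrFun (congrArg (A *ᵥ ·) (inner_rows_eq_mulVec_star N y hy v)) i
    rw [mulVec_mulVec, hAN, zero_mulVec] at h
    exact h
  obtain ⟨j, hji, hj⟩ :=
    exists_ne_norm_div_sum_le_norm_of_sum_mul_eq_zero (hdiag i) hrow hvi
  exact ⟨i, j, hji.symm, hj⟩

theorem stmt_14 (d k : ℕ) (hd : 0 < d) (hk : 0 < k)
    (A : Matrix (Fin (d + k)) (Fin (d + k)) ℂ)
    (hdiag : ∀ i, A i i = 1) (hrank : A.rank ≤ d)
    (N : Matrix (Fin (d + k)) (Fin k) ℂ) (hN : N.rank = k) (hAN : A * N = 0)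
    (y : Fin (d + k) → EuclideanSpace ℂ (Fin k)) (hy : ∀ i a, y i a = N i a)
    (v : EuclideanSpace ℂ (Fin k)) (i : Fin (d + k))
    (hvi : (inner ℂ v (y i) : ℂ) ≠ 0) :
    ∃ a b, a ≠ b ∧
      ‖(inner ℂ v (y i) : ℂ)‖ /
        (∑ j ∈ Finset.univ.erase i, ‖(inner ℂ v (y j) : ℂ)‖) ≤
      ‖A a b‖ :=
  stmt_14_general d k A hdiag N hAN y hy v i hvi
end

section
/- For every probability measure μ on ℝ² that is the uniform distribution on a finite multiset of vectors spanning ℝ², there exist a nonzero vector v ∈ ℝ² and a point y in the support of μ such that E_{x∼μ}|⟨x, v⟩| ≤ (2/3)·|⟨y, v⟩|. -/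
open scoped RealInnerProductSpace

/-! Since the `x j` span, `p v = max_j |⟪x j, v⟫|` is a norm on `ℝ²`. By the intermediate value
theorem there are `p`-unit vectors `u`, `w` with `p (u + w) = 1`: the points `±u, ±w, ±(u + w)`
form an affinely regular hexagon inscribed in the unit circle of `p`. For each `j`, the numbers
`a = ⟪x j, u⟫`, `b = ⟪x j, w⟫` and `a + b` lie in `[-1, 1]`, hence `|a| + |b| + |a + b| ≤ 2`.
Averaging over `j`, one of the directions `v ∈ {u, w, u + w}` has mean `|⟪x j, v⟫|` at most
`2 / 3 = (2 / 3) p v`, and `p v` is attained at some `x i`. -/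

lemma abs_add_abs_add_abs_add_le_two {a b : ℝ} (ha : |a| ≤ 1) (hb : |b| ≤ 1) (hab : |a + b| ≤ 1) :
    |a| + |b| + |a + b| ≤ 2 := by
  rcases abs_cases a with ⟨h₁, _⟩ | ⟨h₁, _⟩ <;> rcases abs_cases b with ⟨h₂, _⟩ | ⟨h₂, _⟩ <;>
    rcases abs_cases (a + b) with ⟨h₃, _⟩ | ⟨h₃, _⟩ <;> linarith

namespace Seminorm

variable {E : Type*} [AddCommGroup E] [Module ℝ E]

lemma apply_inv_smul_self (p : Seminorm ℝ E) {v : E} (hv : p v ≠ 0) : p ((p v)⁻¹ • v) = 1 := by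
  rw [map_smul_eq_mul, Real.norm_eq_abs, abs_inv, abs_of_nonneg (apply_nonneg p v),
    inv_mul_cancel₀ hv]

variable [TopologicalSpace E] [ContinuousAdd E] [ContinuousSMul ℝ E]

/-- `w ↦ p (u + w / p w)` is continuous on the connected set `{0}ᶜ`, equals `2` at `u` and `0`
at `-u`, so it takes the value `1`. -/
theorem exists_apply_eq_one_apply_add_eq_one (h : 1 < Module.rank ℝ E) (p : Seminorm ℝ E)
    (hp : Continuous p) (hp₀ : ∀ v, p v = 0 → v = 0) :
    ∃ u w : E, p u = 1 ∧ p w = 1 ∧ p (u + w) = 1 := by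
  have hpos : ∀ v : E, v ≠ 0 → p v ≠ 0 := fun v hv hpv => hv (hp₀ v hpv)
  have : Nontrivial E := rank_pos_iff_nontrivial.mp (zero_lt_one.trans h)
  obtain ⟨v, hv⟩ := exists_ne (0 : E)
  set u := (p v)⁻¹ • v
  have hu : p u = 1 := p.apply_inv_smul_self (hpos v hv)
  have hu₀ : u ≠ 0 := fun hu0 => by simp [hu0] at hu
  let f : E → ℝ := fun w => p (u + (p w)⁻¹ • w)
  have hf : ContinuousOn f {0}ᶜ := hp.comp_continuousOn <| continuousOn_const.add <|
    (hp.continuousOn.inv₀ hpos).smul continuousOn_id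
  have h₁ : (1 : ℝ) ∈ Set.Icc (f (-u)) (f u) := by
    simp only [f, map_neg_eq_map, hu, inv_one, one_smul, add_neg_cancel, map_zero, ← two_smul ℝ u,
      map_smul_eq_mul]
    norm_num
  obtain ⟨w, hw, hfw⟩ := (isConnected_compl_singleton_of_one_lt_rank h 0).isPreconnected
    |>.intermediate_value (neg_ne_zero.mpr hu₀) hu₀ hf h₁
  exact ⟨u, (p w)⁻¹ • w, hu, p.apply_inv_smul_self (hpos w hw), hfw⟩

end Seminorm

section MaxAbsInner

variable {ι E : Type*} [Fintype ι] [NormedAddCommGroup E] [InnerProductSpace ℝ E]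

noncomputable def maxAbsInner (x : ι → E) : Seminorm ℝ E :=
  Finset.univ.sup fun i => (normSeminorm ℝ ℝ).comp (innerₗ E (x i))

variable (x : ι → E)

lemma abs_inner_le_maxAbsInner (i : ι) (v : E) : |⟪x i, v⟫| ≤ maxAbsInner x v := by
  simpa [maxAbsInner] using Seminorm.le_finset_sup_apply (x := v) (Finset.mem_univ i)
    (p := fun j => (normSeminorm ℝ ℝ).comp (innerₗ E (x j)))

lemma exists_maxAbsInner_eq_abs_inner [Nonempty ι] (v : E) : ∃ i, maxAbsInner x v = |⟪x i, v⟫| := by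
  obtain ⟨i, -, hi⟩ := Seminorm.exists_apply_eq_finset_sup
    (fun j => (normSeminorm ℝ ℝ).comp (innerₗ E (x j))) Finset.univ_nonempty v
  exact ⟨i, by simpa [maxAbsInner] using hi⟩

lemma continuous_maxAbsInner : Continuous (maxAbsInner x) :=
  Seminorm.continuous_finsetSup fun i _ =>
    show Continuous fun v => ‖⟪x i, v⟫‖ from (continuous_const.inner continuous_id).norm

variable {x}

lemma eq_zero_of_maxAbsInner_eq_zero (hx : Submodule.span ℝ (Set.range x) = ⊤) {v : E}
    (hv : maxAbsInner x v = 0) : v = 0 := by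
  have hperp : innerₗ E v = 0 := LinearMap.ext_on_range hx fun i => by
    have := abs_inner_le_maxAbsInner x i v
    rw [hv] at this
    simpa [real_inner_comm] using this
  simpa using LinearMap.congr_fun hperp v

lemma sum_abs_inner_add_le {u w : E} (hu : maxAbsInner x u ≤ 1) (hw : maxAbsInner x w ≤ 1)
    (huw : maxAbsInner x (u + w) ≤ 1) :
    ∑ i, (|⟪x i, u⟫| + |⟪x i, w⟫| + |⟪x i, u + w⟫|) ≤ 2 * Fintype.card ι := by
  calc ∑ i, (|⟪x i, u⟫| + |⟪x i, w⟫| + |⟪x i, u + w⟫|) ≤ ∑ _i : ι, (2 : ℝ) :=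
        Finset.sum_le_sum fun i _ => by
          have h := abs_inner_le_maxAbsInner x i (u + w)
          rw [inner_add_right] at h ⊢
          exact abs_add_abs_add_abs_add_le_two ((abs_inner_le_maxAbsInner x i u).trans hu)
            ((abs_inner_le_maxAbsInner x i w).trans hw) (h.trans huw)
    _ = 2 * Fintype.card ι := by simp [mul_comm]

end MaxAbsInner

theorem stmt_16 (n : ℕ) (hn : 0 < n)
    (x : Fin n → EuclideanSpace ℝ (Fin 2))
    (hspan : Submodule.span ℝ (Set.range x) = ⊤) :
    ∃ v : EuclideanSpace ℝ (Fin 2), v ≠ 0 ∧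
      ∃ i : Fin n, (1 / (n : ℝ)) * ∑ j, |⟪x j, v⟫| ≤ (2 / 3) * |⟪x i, v⟫| := by
  have : NeZero n := ⟨hn.ne'⟩
  obtain ⟨u, w, hu, hw, huw⟩ := (maxAbsInner x).exists_apply_eq_one_apply_add_eq_one
    (Module.one_lt_rank_of_one_lt_finrank (by simp))
    (continuous_maxAbsInner x) fun _ => eq_zero_of_maxAbsInner_eq_zero hspan
  obtain ⟨v, hv, hsum⟩ : ∃ v, maxAbsInner x v = 1 ∧ ∑ j, |⟪x j, v⟫| ≤ 2 / 3 * n := by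
    by_contra! h
    have htotal := sum_abs_inner_add_le hu.le hw.le huw.le
    simp only [Finset.sum_add_distrib, Fintype.card_fin] at htotal
    linarith [h u hu, h w hw, h _ huw]
  obtain ⟨i, hi⟩ := exists_maxAbsInner_eq_abs_inner x v
  refine ⟨v, fun h => by simp [h] at hv, i, ?_⟩
  rw [← hi, hv, mul_one, one_div_mul_eq_div, div_le_iff₀ (by positivity)]
  exact hsum
end

section
/- Let q be a prime power with q ≡ 3 (mod 4). Then there exists a real Hadamard matrix of order q+1, i.e., a matrix H ∈ {±1}^{(q+1)×(q+1)} with H^T H = (q+1)·I_{q+1}. -/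
/-!
Let χ be the quadratic character of `F_q`. Bordering the matrix `(χ (a - b))` by a row of `1`s
and a column of `-1`s gives a matrix `C` with zero diagonal and `±1` off the diagonal. Since
`q ≡ 3 (mod 4)`, `χ (-1) = -1`, so `C` is skew-symmetric; and the Jacobi sum evaluation
`∑ c, χ (c - a) χ (c - b) = -1` for `a ≠ b` gives `Cᵀ C = q • 1`. Hence
`(1 + C)ᵀ (1 + C) = 1 + (Cᵀ + C) + Cᵀ C = (q + 1) • 1`.
-/

open Matrix

namespace Matrix

variable {n R : Type*} [Fintype n] [DecidableEq n]

theorem isHadamard_one_add_of_conjTranspose_eq_neg [Ring R] [StarRing R] {C : Matrix n n R}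
    (hskew : Cᴴ = -C) (hconf : Cᴴ * C = ((Fintype.card n : R) - 1) • 1)
    (hdiag : ∀ i, C i i = 0) (hoff : ∀ i j, i ≠ j → C i j ∈ unitary R) :
    (1 + C).IsHadamard := by
  have hH : (1 + C)ᴴ = 1 - C := by
    rw [conjTranspose_add, conjTranspose_one, hskew, sub_eq_add_neg]
  have hsq : 1 - C * C = (Fintype.card n : R) • (1 : Matrix n n R) := by
    have hCC : C * C = -(Cᴴ * C) := by rw [hskew, neg_mul, neg_neg]
    rw [hCC, hconf, sub_neg_eq_add, sub_smul, one_smul, add_sub_cancel]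
  refine ⟨fun i j => ?_, ?_, ?_⟩
  · rcases eq_or_ne i j with rfl | hij
    · simp [hdiag]
    · simpa [one_apply_ne hij] using hoff i j hij
  · rw [hH, ← hsq]; noncomm_ring
  · rw [hH, ← hsq]; noncomm_ring

end Matrix

section QuadraticChar

variable {F : Type*} [Field F] [Fintype F] [DecidableEq F]

theorem quadraticChar_sum_sub (hF : ringChar F ≠ 2) (b : F) :
    ∑ c : F, quadraticChar F (c - b) = 0 :=
  ((Equiv.subRight b).sum_comp (quadraticChar F)).trans (quadraticChar_sum_zero hF)

theorem quadraticChar_sum_mul_self_sub (a : F) :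
    ∑ c : F, quadraticChar F (c - a) * quadraticChar F (c - a) = Fintype.card F - 1 := by
  refine ((Equiv.subRight a).sum_comp fun x => quadraticChar F x * quadraticChar F x).trans ?_
  simp_rw [← sq, ← MulChar.pow_apply' _ two_ne_zero, (quadraticChar_isQuadratic F).sq_eq_one,
    MulChar.sum_one_eq_card_units, Fintype.card_units, Nat.cast_sub Fintype.card_pos, Nat.cast_one]

theorem quadraticChar_sum_mul_sub_sub (hF : ringChar F ≠ 2) {a b : F} (hab : a ≠ b) :
    ∑ c : F, quadraticChar F (c - a) * quadraticChar F (c - b) = -1 := by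
  set χ := quadraticChar F
  have hd : b - a ≠ 0 := sub_ne_zero.2 hab.symm
  have hJ : ∑ y : F, χ y * χ (1 - y) = -χ (-1) := by
    have := jacobiSum_nontrivial_inv (quadraticChar_ne_one hF)
    rwa [(quadraticChar_isQuadratic F).inv] at this
  -- `c = a + (b - a) * y` turns the sum into `χ (-1)` times the Jacobi sum `J(χ, χ)`.
  let e : F ≃ F := (Equiv.mulLeft₀ (b - a) hd).trans (Equiv.addLeft a)
  calc ∑ c, χ (c - a) * χ (c - b) = ∑ y, χ (e y - a) * χ (e y - b) := (e.sum_comp _).symm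
    _ = ∑ y, χ (b - a) ^ 2 * χ (-1) * (χ y * χ (1 - y)) := by
      refine Fintype.sum_congr _ _ fun y => ?_
      have h1 : e y - a = (b - a) * y := by simp [e]
      have h2 : e y - b = (b - a) * (-1) * (1 - y) := by simp [e]; ring
      rw [h1, h2, map_mul, map_mul, map_mul]; ring
    _ = -1 := by
      rw [← Finset.mul_sum, hJ, quadraticChar_sq_one hd, one_mul, mul_neg, ← sq,
        quadraticChar_sq_one (neg_ne_zero.2 one_ne_zero)]

end QuadraticChar

section Paley

variable (F : Type*) [Field F] [Fintype F] [DecidableEq F] (R : Type*) [CommRing R]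

def paleyMatrix : Matrix (Option F) (Option F) R :=
  Matrix.of fun i j =>
    match i, j with
    | none, none => 0
    | none, some _ => 1
    | some _, none => -1
    | some a, some b => quadraticChar F (a - b)

variable {F R}

@[simp] theorem paleyMatrix_none_none : paleyMatrix F R none none = 0 := rfl
@[simp] theorem paleyMatrix_none_some (b : F) : paleyMatrix F R none (some b) = 1 := rfl
@[simp] theorem paleyMatrix_some_none (a : F) : paleyMatrix F R (some a) none = -1 := rfl
@[simp] theorem paleyMatrix_some_some (a b : F) :
    paleyMatrix F R (some a) (some b) = quadraticChar F (a - b) := rfl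

theorem paleyMatrix_apply_self (i : Option F) : paleyMatrix F R i i = 0 := by
  cases i <;> simp

theorem paleyMatrix_apply_of_ne {i j : Option F} (hij : i ≠ j) :
    paleyMatrix F R i j = 1 ∨ paleyMatrix F R i j = -1 := by
  rcases i with _ | a <;> rcases j with _ | b
  · exact absurd rfl hij
  · simp
  · simp
  · have hab : a - b ≠ 0 := sub_ne_zero.2 fun h => hij (congrArg some h)
    rcases quadraticChar_dichotomy hab with h | h <;> simp [h]

theorem paleyMatrix_transpose (h : quadraticChar F (-1) = -1) :
    (paleyMatrix F R)ᵀ = -paleyMatrix F R := by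
  ext i j
  rcases i with _ | a <;> rcases j with _ | b
  · simp
  · simp
  · simp
  · rw [transpose_apply, neg_apply, paleyMatrix_some_some, paleyMatrix_some_some,
      ← neg_sub, ← neg_one_mul, map_mul, h]
    push_cast; ring

theorem paleyMatrix_transpose_mul_self (hF : ringChar F ≠ 2) :
    (paleyMatrix F R)ᵀ * paleyMatrix F R = (Fintype.card F : R) • 1 := by
  ext i j
  rw [mul_apply, Fintype.sum_option]
  rcases i with _ | a <;> rcases j with _ | b
  · simp
  · simp [-quadraticChar_apply, ← Int.cast_sum, quadraticChar_sum_sub hF]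
  · simp [-quadraticChar_apply, ← Int.cast_sum, quadraticChar_sum_sub hF]
  · rcases eq_or_ne a b with rfl | hab
    · simp [-quadraticChar_apply, ← Int.cast_mul, ← Int.cast_sum,
        quadraticChar_sum_mul_self_sub]
    · simp [-quadraticChar_apply, ← Int.cast_mul, ← Int.cast_sum,
        quadraticChar_sum_mul_sub_sub hF hab, hab]

theorem isHadamard_one_add_paleyMatrix [StarRing R] [TrivialStar R]
    (h : Fintype.card F % 4 = 3) : (1 + paleyMatrix F R).IsHadamard := by
  have hF : ringChar F ≠ 2 := fun h2 => by
    have := FiniteField.even_card_iff_char_two.1 h2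
    omega
  have hneg : quadraticChar F (-1) = -1 := by
    rw [quadraticChar_neg_one hF, ZMod.χ₄_nat_three_mod_four h]
  refine isHadamard_one_add_of_conjTranspose_eq_neg ?_ ?_ paleyMatrix_apply_self fun i j hij => ?_
  · rw [conjTranspose_eq_transpose_of_trivial, paleyMatrix_transpose hneg]
  · rw [conjTranspose_eq_transpose_of_trivial, paleyMatrix_transpose_mul_self hF,
      Fintype.card_option, Nat.cast_succ, add_sub_cancel_right]
  · rcases paleyMatrix_apply_of_ne (R := R) hij with h | h <;> simp [h, Unitary.mem_iff]

end Paley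

theorem stmt_17 (q : ℕ) (hq : IsPrimePow q) (hmod : q % 4 = 3) :
    ∃ H : Matrix (Fin (q + 1)) (Fin (q + 1)) ℝ,
      (∀ i j, H i j = 1 ∨ H i j = -1) ∧
      Hᵀ * H = ((q : ℝ) + 1) • (1 : Matrix (Fin (q + 1)) (Fin (q + 1)) ℝ) := by
  obtain ⟨p, k, hp, hk, rfl⟩ := hq
  have : Fact p.Prime := ⟨hp.nat_prime⟩
  classical
  let F := GaloisField p k
  let : Fintype F := Fintype.ofFinite F
  have hcard : Fintype.card F = p ^ k := by
    rw [← Nat.card_eq_fintype_card, GaloisField.card p k hk.ne']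
  let e : Option F ≃ Fin (p ^ k + 1) :=
    Fintype.equivFinOfCardEq (by rw [Fintype.card_option, hcard])
  have hH := (isHadamard_one_add_paleyMatrix (F := F) (R := ℝ) (hcard ▸ hmod)).reindex e e
  refine ⟨_, fun i j => Unitary.mem_iff_eq_one_or_eq_neg_one.1 (hH.apply_mem i j), ?_⟩
  simpa [conjTranspose_eq_transpose_of_trivial] using hH.conjTranspose_mul
end
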